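/- arXiv:2201.06101 — 2 statements merged into one kernel-verified Lean document; each statement's English description precedes it below -/
import Mathlib

section
/- For every m ∈ (-1,1) there exist constants c₁ > 0 and c₂ ≥ 0 such that for all s ∈ (-1,1), F₀'(s)(s - m) ≥ c₁|F₀'(s)| - c₂. -/
private lemma log_ratio_mono {a b : ℝ} (ha : 0 ≤ a) (hab : a ≤ b) (hb : b < 1) :
    Real.log ((1 + a) / (1 - a)) ≤ Real.log ((1 + b) / (1 - b)) := by
  have h1 : (0:ℝ) < 1 - a := by linarith
  have h2 : (0:ℝ) < 1 - b := by linarith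
  apply Real.log_le_log (by positivity)
  rw [div_le_div_iff₀ h1 h2]
  nlinarith

private lemma log_ratio_sign {s : ℝ} (hs : s ∈ Set.Ioo (-1:ℝ) 1) :
    0 ≤ s * Real.log ((1 + s) / (1 - s)) := by
  obtain ⟨h1, h2⟩ := hs
  have hp : (0:ℝ) < 1 + s := by linarith
  have hm : (0:ℝ) < 1 - s := by linarith
  rcases le_or_gt 0 s with h | h
  · exact mul_nonneg h (Real.log_nonneg (by rw [le_div_iff₀ hm]; linarith))
  · have hl : Real.log ((1 + s) / (1 - s)) ≤ 0 := by
      apply Real.log_nonpos (by positivity)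
      rw [div_le_one hm]; linarith
    nlinarith

private lemma log_ratio_abs {s : ℝ} (hs : s ∈ Set.Ioo (-1:ℝ) 1) :
    |Real.log ((1 + s) / (1 - s))| = Real.log ((1 + |s|) / (1 - |s|)) := by
  obtain ⟨h1, h2⟩ := hs
  have hp : (0:ℝ) < 1 + s := by linarith
  have hm : (0:ℝ) < 1 - s := by linarith
  rcases le_or_gt 0 s with h | h
  · rw [abs_of_nonneg h, abs_of_nonneg (Real.log_nonneg (by rw [le_div_iff₀ hm]; linarith))]
  · rw [abs_of_neg h, abs_of_nonpos, Real.log_div hp.ne' hm.ne']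
    · have : (1 + -s) = 1 - s := by ring
      rw [this]
      have : (1 - -s) = 1 + s := by ring
      rw [this, Real.log_div hm.ne' hp.ne']
      ring
    · apply Real.log_nonpos (by positivity)
      rw [div_le_one hm]; linarith

/-- Coercivity of the logarithmic potential: for every `m ∈ (-1,1)` there are `c₁ > 0`,
`c₂ ≥ 0` such that `F₀'(s)(s - m) ≥ c₁|F₀'(s)| - c₂` for all `s ∈ (-1,1)`,
where `F₀'(s) = (θ/2)log((1+s)/(1-s))`. -/
theorem stmt_3 (θ : ℝ) (hθ : 0 < θ) :
    ∀ m ∈ Set.Ioo (-1 : ℝ) 1, ∃ c₁ : ℝ, 0 < c₁ ∧ ∃ c₂ : ℝ, 0 ≤ c₂ ∧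
      ∀ s ∈ Set.Ioo (-1 : ℝ) 1,
        c₁ * |θ / 2 * Real.log ((1 + s) / (1 - s))| - c₂
          ≤ θ / 2 * Real.log ((1 + s) / (1 - s)) * (s - m) := by
  intro m hm
  obtain ⟨hm1, hm2⟩ := hm
  have hma : |m| < 1 := abs_lt.mpr ⟨hm1, hm2⟩
  have hma0 : 0 ≤ |m| := abs_nonneg m
  set r : ℝ := (1 + |m|) / 2 with hr
  have hr1 : r < 1 := by rw [hr]; linarith
  have hr0 : 0 ≤ r := by positivity
  have hrm : |m| < r := by rw [hr]; linarith
  set c₁ : ℝ := (1 - |m|) / 2 with hc1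
  have hc1pos : 0 < c₁ := by rw [hc1]; linarith
  set M : ℝ := θ / 2 * Real.log ((1 + r) / (1 - r)) with hM
  have hM0 : 0 ≤ M := by
    apply mul_nonneg (by positivity)
    apply Real.log_nonneg
    rw [le_div_iff₀ (by linarith : (0:ℝ) < 1 - r)]; linarith
  refine ⟨c₁, hc1pos, M * (1 + c₁), by positivity, ?_⟩
  intro s hs
  obtain ⟨hs1, hs2⟩ := hs
  set g : ℝ := θ / 2 * Real.log ((1 + s) / (1 - s)) with hg
  have hLs := log_ratio_sign (⟨hs1, hs2⟩ : s ∈ Set.Ioo (-1:ℝ) 1)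
  have hgs : g * s = |g| * |s| := by
    rw [← abs_mul, abs_of_nonneg]
    have h0 : 0 ≤ θ / 2 * (s * Real.log ((1 + s) / (1 - s))) :=
      mul_nonneg (by positivity) hLs
    rw [hg]; nlinarith [h0]
  have hgm : g * m ≤ |g| * |m| := by
    rw [← abs_mul]; exact le_abs_self _
  have hkey : |g| * (|s| - |m|) ≤ g * (s - m) := by
    have : g * (s - m) = g * s - g * m := by ring
    rw [this, hgs]; nlinarith [hgm]
  have hgab : 0 ≤ |g| := abs_nonneg g
  rcases le_or_gt r |s| with h | h
  · -- far region
    have h1 : |g| * c₁ ≤ |g| * (|s| - |m|) := by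
      apply mul_le_mul_of_nonneg_left _ hgab
      rw [hc1, hr] at *; linarith
    nlinarith [hM0, hc1pos.le]
  · -- near region: |g| ≤ M
    have hgM : |g| ≤ M := by
      rw [hg, abs_mul, abs_of_nonneg (by positivity : (0:ℝ) ≤ θ/2),
        log_ratio_abs (⟨hs1, hs2⟩ : s ∈ Set.Ioo (-1:ℝ) 1), hM]
      exact mul_le_mul_of_nonneg_left (log_ratio_mono (abs_nonneg s) h.le hr1) (by positivity)
    have h2 : -|g| ≤ |g| * (|s| - |m|) := by nlinarith [abs_nonneg s, hma]
    nlinarith [hgM, hc1pos.le]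
end

section
/- Suppose v_ε ⇀ v weakly in L²(X)^d, ρ_ε^{1/2}v_ε ⇀ w weakly in L²(X)^d for some w, and ∫_X ρ_ε|v_ε|² dμ → ∫_X ρ|v|² dμ, where ρ_ε → ρ a.e. with uniform bounds 0 < c ≤ ρ_ε ≤ C. Then ρ_ε^{1/2}v_ε → ρ^{1/2}v strongly in L²(X)^d. -/
open MeasureTheory Filter Topology
open scoped RealInnerProductSpace

/-! With `u_n = √ρ_n • v_n` and `u = √ρ • v`, we have `⟪u_n, u⟫ = ⟪v_n, √ρ_n • u⟫`. Here
`√ρ_n • u → √ρ • u` strongly in `L²` by dominated convergence, and the weakly convergent `v_n`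
are bounded by Banach–Steinhaus, so `⟪u_n, u⟫ → ⟪v, ρ • v⟫ = ‖u‖²`. Since also
`‖u_n‖² → ‖u‖²`, we get `‖u_n - u‖² = ‖u_n‖² - 2⟪u_n, u⟫ + ‖u‖² → 0`. -/

section InnerProductSpace

variable {F : Type*} [NormedAddCommGroup F] [InnerProductSpace ℝ F]

theorem tendsto_of_tendsto_norm_sq_of_tendsto_inner {ι : Type*} {l : Filter ι} {x : ι → F}
    {y : F} (hnorm : Tendsto (fun i => ‖x i‖ ^ 2) l (𝓝 (‖y‖ ^ 2)))
    (hinner : Tendsto (fun i => ⟪x i, y⟫) l (𝓝 (‖y‖ ^ 2))) : Tendsto x l (𝓝 y) := by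
  have hsq : Tendsto (fun i => ‖x i - y‖ ^ 2) l (𝓝 0) := by
    have h := (hnorm.sub (hinner.const_mul 2)).add_const (‖y‖ ^ 2)
    simp_rw [norm_sub_sq_real]
    convert h using 2
    ring
  rw [tendsto_iff_norm_sub_tendsto_zero]
  simpa [Real.sqrt_sq (norm_nonneg _)] using hsq.sqrt

theorem exists_norm_le_of_tendsto_inner [CompleteSpace F] {x : ℕ → F} {x₀ : F}
    (hx : ∀ z, Tendsto (fun n => ⟪x n, z⟫) atTop (𝓝 ⟪x₀, z⟫)) : ∃ K, ∀ n, ‖x n‖ ≤ K := by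
  obtain ⟨K, hK⟩ := banach_steinhaus (g := fun n => innerSL ℝ (x n)) fun z => by
    obtain ⟨K, hK⟩ := isBounded_iff_forall_norm_le.mp
      (Metric.isBounded_range_of_tendsto _ (hx z))
    exact ⟨K, fun n => hK _ ⟨n, rfl⟩⟩
  exact ⟨K, fun n => innerSL_apply_norm ℝ (x n) ▸ hK n⟩

theorem tendsto_inner_of_weak_of_tendsto [CompleteSpace F] {x y : ℕ → F} {x₀ y₀ : F}
    (hx : ∀ z, Tendsto (fun n => ⟪x n, z⟫) atTop (𝓝 ⟪x₀, z⟫)) (hy : Tendsto y atTop (𝓝 y₀)) :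
    Tendsto (fun n => ⟪x n, y n⟫) atTop (𝓝 ⟪x₀, y₀⟫) := by
  obtain ⟨K, hK⟩ := exists_norm_le_of_tendsto_inner hx
  have hdiff : Tendsto (fun n => ⟪x n, y n⟫ - ⟪x n, y₀⟫) atTop (𝓝 0) := by
    refine squeeze_zero_norm (fun n => ?_)
      (by simpa using (tendsto_iff_norm_sub_tendsto_zero.mp hy).const_mul K)
    rw [← inner_sub_right]
    exact (norm_inner_le_norm _ _).trans (mul_le_mul_of_nonneg_right (hK n) (norm_nonneg _))
  simpa using hdiff.add (hx y₀)

end InnerProductSpace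

section L2

variable {X : Type*} [MeasurableSpace X] {μ : Measure X}
  {E : Type*} [NormedAddCommGroup E] [InnerProductSpace ℝ E]

theorem MeasureTheory.MemLp.inner_toLp_toLp {f g : X → E} (hf : MemLp f 2 μ) (hg : MemLp g 2 μ) :
    ⟪hf.toLp f, hg.toLp g⟫ = ∫ x, ⟪f x, g x⟫ ∂μ := by
  rw [L2.inner_def]
  refine integral_congr_ae ?_
  filter_upwards [hf.coeFn_toLp, hg.coeFn_toLp] with x hfx hgx
  rw [hfx, hgx]

theorem MeasureTheory.MemLp.norm_toLp_sq {f : X → E} (hf : MemLp f 2 μ) :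
    ‖hf.toLp f‖ ^ 2 = ∫ x, ‖f x‖ ^ 2 ∂μ := by
  simp_rw [← real_inner_self_eq_norm_sq, hf.inner_toLp_toLp hf]

theorem tendsto_toLp_of_tendsto_integral_norm_sub_sq {ι : Type*} {l : Filter ι} {f : ι → X → E}
    {g : X → E} (hf : ∀ i, MemLp (f i) 2 μ) (hg : MemLp g 2 μ)
    (h : Tendsto (fun i => ∫ x, ‖f i x - g x‖ ^ 2 ∂μ) l (𝓝 0)) :
    Tendsto (fun i => (hf i).toLp (f i)) l (𝓝 (hg.toLp g)) := by
  have hnorm : ∀ i, ‖(hf i).toLp (f i) - hg.toLp g‖ = √(∫ x, ‖f i x - g x‖ ^ 2 ∂μ) := fun i => by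
    rw [← MemLp.toLp_sub, ← Real.sqrt_sq (norm_nonneg _), MemLp.norm_toLp_sq]
    rfl
  rw [tendsto_iff_norm_sub_tendsto_zero]
  simpa [hnorm] using h.sqrt

theorem tendsto_inner_toLp_of_tendsto_integral_inner {v : ℕ → X → E} {v₀ : X → E}
    (hv : ∀ n, MemLp (v n) 2 μ) (hv₀ : MemLp v₀ 2 μ)
    (hweak : ∀ g : X → E, MemLp g 2 μ →
      Tendsto (fun n => ∫ x, ⟪v n x, g x⟫ ∂μ) atTop (𝓝 (∫ x, ⟪v₀ x, g x⟫ ∂μ)))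
    (z : Lp E 2 μ) :
    Tendsto (fun n => ⟪(hv n).toLp (v n), z⟫) atTop (𝓝 ⟪hv₀.toLp v₀, z⟫) := by
  rw [← Lp.toLp_coeFn z (Lp.memLp z)]
  simpa only [MemLp.inner_toLp_toLp] using hweak z (Lp.memLp z)

theorem tendsto_integral_norm_smul_sub_smul_sq {φ : ℕ → X → ℝ} {φ₀ : X → ℝ} {f : X → E} {K : ℝ}
    (hφ : ∀ n, AEStronglyMeasurable (φ n) μ) (hφ₀ : AEStronglyMeasurable φ₀ μ)
    (hK : ∀ n, ∀ᵐ x ∂μ, ‖φ n x‖ ≤ K) (hK₀ : ∀ᵐ x ∂μ, ‖φ₀ x‖ ≤ K)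
    (hlim : ∀ᵐ x ∂μ, Tendsto (fun n => φ n x) atTop (𝓝 (φ₀ x))) (hf : MemLp f 2 μ) :
    Tendsto (fun n => ∫ x, ‖φ n x • f x - φ₀ x • f x‖ ^ 2 ∂μ) atTop (𝓝 0) := by
  rw [← integral_zero X ℝ]
  refine tendsto_integral_of_dominated_convergence (fun x => (2 * K) ^ 2 * ‖f x‖ ^ 2)
    (fun n => (((hφ n).smul hf.1).sub (hφ₀.smul hf.1)).norm.pow 2)
    ((hf.integrable_norm_pow two_ne_zero).const_mul _) (fun n => ?_) ?_
  · filter_upwards [hK n, hK₀] with x hx hx₀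
    rw [Real.norm_of_nonneg (sq_nonneg _), ← mul_pow, ← sub_smul, norm_smul]
    gcongr
    linarith [norm_sub_le (φ n x) (φ₀ x)]
  · filter_upwards [hlim] with x hx
    simpa using (((hx.smul_const (f x)).sub_const (φ₀ x • f x)).norm.pow 2)

theorem tendsto_integral_inner_smul_of_tendsto_integral_inner [CompleteSpace E]
    {φ : ℕ → X → ℝ} {φ₀ : X → ℝ} {K : ℝ} {v : ℕ → X → E} {v₀ g : X → E}
    (hφ : ∀ n, AEStronglyMeasurable (φ n) μ) (hK : ∀ n, ∀ᵐ x ∂μ, ‖φ n x‖ ≤ K)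
    (hlim : ∀ᵐ x ∂μ, Tendsto (fun n => φ n x) atTop (𝓝 (φ₀ x)))
    (hv : ∀ n, MemLp (v n) 2 μ) (hv₀ : MemLp v₀ 2 μ)
    (hweak : ∀ g : X → E, MemLp g 2 μ →
      Tendsto (fun n => ∫ x, ⟪v n x, g x⟫ ∂μ) atTop (𝓝 (∫ x, ⟪v₀ x, g x⟫ ∂μ)))
    (hg : MemLp g 2 μ) :
    Tendsto (fun n => ∫ x, ⟪φ n x • v n x, g x⟫ ∂μ) atTop
      (𝓝 (∫ x, ⟪φ₀ x • v₀ x, g x⟫ ∂μ)) := by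
  have hφ₀ : AEStronglyMeasurable φ₀ μ := aestronglyMeasurable_of_tendsto_ae atTop hφ hlim
  have hK₀ : ∀ᵐ x ∂μ, ‖φ₀ x‖ ≤ K := by
    filter_upwards [ae_all_iff.mpr hK, hlim] with x hxK hx
    exact le_of_tendsto' hx.norm hxK
  have hφg n : MemLp (fun x => φ n x • g x) 2 μ := hg.smul (memLp_top_of_bound (hφ n) K (hK n))
  have hφ₀g : MemLp (fun x => φ₀ x • g x) 2 μ := hg.smul (memLp_top_of_bound hφ₀ K hK₀)
  have h := tendsto_inner_of_weak_of_tendsto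
    (tendsto_inner_toLp_of_tendsto_integral_inner hv hv₀ hweak)
    (tendsto_toLp_of_tendsto_integral_norm_sub_sq hφg hφ₀g
      (tendsto_integral_norm_smul_sub_smul_sq hφ hφ₀ hK hK₀ hlim hg))
  simpa only [MemLp.inner_toLp_toLp, real_inner_smul_left, real_inner_smul_right] using h

theorem tendsto_eLpNorm_sub_of_tendsto_integral_norm_sq {f : ℕ → X → E} {g : X → E}
    (hf : ∀ n, MemLp (f n) 2 μ) (hg : MemLp g 2 μ)
    (hnorm : Tendsto (fun n => ∫ x, ‖f n x‖ ^ 2 ∂μ) atTop (𝓝 (∫ x, ‖g x‖ ^ 2 ∂μ)))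
    (hinner : Tendsto (fun n => ∫ x, ⟪f n x, g x⟫ ∂μ) atTop (𝓝 (∫ x, ‖g x‖ ^ 2 ∂μ))) :
    Tendsto (fun n => eLpNorm (fun x => f n x - g x) 2 μ) atTop (𝓝 0) := by
  refine (Lp.tendsto_Lp_iff_tendsto_eLpNorm'' f hf g hg).mp
    (tendsto_of_tendsto_norm_sq_of_tendsto_inner ?_ ?_)
  · simpa only [MemLp.norm_toLp_sq] using hnorm
  · simpa only [MemLp.norm_toLp_sq, MemLp.inner_toLp_toLp] using hinner

end L2

theorem norm_sqrt_smul_sq {F : Type*} [NormedAddCommGroup F] [NormedSpace ℝ F] {a : ℝ}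
    (ha : 0 ≤ a) (y : F) : ‖√a • y‖ ^ 2 = a * ‖y‖ ^ 2 := by
  rw [norm_smul, mul_pow, Real.norm_of_nonneg (Real.sqrt_nonneg a), Real.sq_sqrt ha]

theorem norm_sqrt_le_sqrt {a C : ℝ} (h : a ≤ C) : ‖√a‖ ≤ √C := by
  rw [Real.norm_of_nonneg (Real.sqrt_nonneg a)]
  exact Real.sqrt_le_sqrt h

theorem stmt_7_general {X : Type*} [MeasurableSpace X] (μ : Measure X)
    {d : ℕ}
    (c C : ℝ) (hc : 0 < c)
    (ρn : ℕ → X → ℝ) (ρ : X → ℝ)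
    (hρnmeas : ∀ n, Measurable (ρn n)) (hρmeas : Measurable ρ)
    (hρnbd : ∀ n, ∀ᵐ x ∂μ, ρn n x ∈ Set.Icc c C)
    (hρbd : ∀ᵐ x ∂μ, ρ x ∈ Set.Icc c C)
    (hae : ∀ᵐ x ∂μ, Tendsto (fun n => ρn n x) atTop (nhds (ρ x)))
    (v : ℕ → X → EuclideanSpace ℝ (Fin d)) (v₀ : X → EuclideanSpace ℝ (Fin d))
    (hv : ∀ n, MemLp (v n) 2 μ) (hv₀ : MemLp v₀ 2 μ)
    (hweak : ∀ g : X → EuclideanSpace ℝ (Fin d), MemLp g 2 μ →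
      Tendsto (fun n => ∫ x, (inner ℝ (v n x) (g x) : ℝ) ∂μ) atTop
        (nhds (∫ x, (inner ℝ (v₀ x) (g x) : ℝ) ∂μ)))
    (hnorm : Tendsto (fun n => ∫ x, ρn n x * ‖v n x‖ ^ 2 ∂μ) atTop
      (nhds (∫ x, ρ x * ‖v₀ x‖ ^ 2 ∂μ))) :
    Tendsto
      (fun n => eLpNorm (fun x => Real.sqrt (ρn n x) • v n x - Real.sqrt (ρ x) • v₀ x) 2 μ)
      atTop (nhds 0) := by
  have hbd n : ∀ᵐ x ∂μ, ‖√(ρn n x)‖ ≤ √C := (hρnbd n).mono fun _ hx => norm_sqrt_le_sqrt hx.2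
  have hu n : MemLp (fun x => √(ρn n x) • v n x) 2 μ :=
    (hv n).smul (memLp_top_of_bound (hρnmeas n).sqrt.aestronglyMeasurable _ (hbd n))
  have hu₀ : MemLp (fun x => √(ρ x) • v₀ x) 2 μ :=
    hv₀.smul (memLp_top_of_bound hρmeas.sqrt.aestronglyMeasurable √C
      (hρbd.mono fun _ hx => norm_sqrt_le_sqrt hx.2))
  have hnorm_u n : ∫ x, ‖√(ρn n x) • v n x‖ ^ 2 ∂μ = ∫ x, ρn n x * ‖v n x‖ ^ 2 ∂μ :=
    integral_congr_ae ((hρnbd n).mono fun x hx => norm_sqrt_smul_sq (hc.le.trans hx.1) _)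
  have hnorm_u₀ : ∫ x, ‖√(ρ x) • v₀ x‖ ^ 2 ∂μ = ∫ x, ρ x * ‖v₀ x‖ ^ 2 ∂μ :=
    integral_congr_ae (hρbd.mono fun x hx => norm_sqrt_smul_sq (hc.le.trans hx.1) _)
  refine tendsto_eLpNorm_sub_of_tendsto_integral_norm_sq hu hu₀ ?_ ?_
  · simpa only [hnorm_u, hnorm_u₀] using hnorm
  · simpa only [real_inner_self_eq_norm_sq] using
      tendsto_integral_inner_smul_of_tendsto_integral_inner
        (fun n => (hρnmeas n).sqrt.aestronglyMeasurable) hbd (hae.mono fun _ hx => hx.sqrt)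
        hv hv₀ hweak hu₀

/-- If `v_n ⇀ v` weakly in `L²(X;ℝ^d)`, `√ρ_n • v_n ⇀ w` weakly in `L²(X;ℝ^d)` for some `w`,
`∫ ρ_n|v_n|² → ∫ ρ|v|²`, `ρ_n → ρ` a.e. with uniform bounds `0 < c ≤ ρ_n, ρ ≤ C`, then
`√ρ_n • v_n → √ρ • v` strongly in `L²(X;ℝ^d)`. -/
theorem stmt_7 {X : Type*} [MeasurableSpace X] (μ : Measure X) [IsFiniteMeasure μ]
    {d : ℕ} (hd : 1 ≤ d)
    (c C : ℝ) (hc : 0 < c) (hcC : c ≤ C)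
    (ρn : ℕ → X → ℝ) (ρ : X → ℝ)
    (hρnmeas : ∀ n, Measurable (ρn n)) (hρmeas : Measurable ρ)
    (hρnbd : ∀ n, ∀ᵐ x ∂μ, ρn n x ∈ Set.Icc c C)
    (hρbd : ∀ᵐ x ∂μ, ρ x ∈ Set.Icc c C)
    (hae : ∀ᵐ x ∂μ, Tendsto (fun n => ρn n x) atTop (nhds (ρ x)))
    (v : ℕ → X → EuclideanSpace ℝ (Fin d)) (v₀ : X → EuclideanSpace ℝ (Fin d))
    (hv : ∀ n, MemLp (v n) 2 μ) (hv₀ : MemLp v₀ 2 μ)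
    (hweak : ∀ g : X → EuclideanSpace ℝ (Fin d), MemLp g 2 μ →
      Tendsto (fun n => ∫ x, (inner ℝ (v n x) (g x) : ℝ) ∂μ) atTop
        (nhds (∫ x, (inner ℝ (v₀ x) (g x) : ℝ) ∂μ)))
    (w : X → EuclideanSpace ℝ (Fin d)) (hwL2 : MemLp w 2 μ)
    (hweak' : ∀ g : X → EuclideanSpace ℝ (Fin d), MemLp g 2 μ →
      Tendsto (fun n => ∫ x, (inner ℝ (Real.sqrt (ρn n x) • v n x) (g x) : ℝ) ∂μ) atTop
        (nhds (∫ x, (inner ℝ (w x) (g x) : ℝ) ∂μ)))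
    (hnorm : Tendsto (fun n => ∫ x, ρn n x * ‖v n x‖ ^ 2 ∂μ) atTop
      (nhds (∫ x, ρ x * ‖v₀ x‖ ^ 2 ∂μ))) :
    Tendsto
      (fun n => eLpNorm (fun x => Real.sqrt (ρn n x) • v n x - Real.sqrt (ρ x) • v₀ x) 2 μ)
      atTop (nhds 0) :=
  stmt_7_general μ c C hc ρn ρ hρnmeas hρmeas hρnbd hρbd hae v v₀ hv hv₀ hweak hnorm
end
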